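/- arXiv:2302.06945 — 7 statements merged into one kernel-verified Lean document; each statement's English description precedes it below -/
import Mathlib

section
/- For every x ∈ ℝⁿ with g(x) ∈ (0,1), the function y ↦ p(x,y) attains its global minimum over ℝ at the unique point y = p₁(x); that is, p(x,y) > p(x,p₁(x)) for every real y ≠ p₁(x). -/
/-- `p(x,y) = (y−p₁(x))²(y−p₂(x))² + r(x)q(x,y)` where `r(x) = g(x)(p₁(x)−p₂(x))` and
`q(x,y) = 2y³ − 3(p₁(x)+p₂(x))y² + 6p₁(x)p₂(x)y`. -/
noncomputable def pwP (n : ℕ) (g p₁ p₂ : MvPolynomial (Fin n) ℝ)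
    (x : Fin n → ℝ) (y : ℝ) : ℝ :=
  (y - MvPolynomial.eval x p₁) ^ 2 * (y - MvPolynomial.eval x p₂) ^ 2 +
    (MvPolynomial.eval x g * (MvPolynomial.eval x p₁ - MvPolynomial.eval x p₂)) *
      (2 * y ^ 3 - 3 * (MvPolynomial.eval x p₁ + MvPolynomial.eval x p₂) * y ^ 2 +
        6 * MvPolynomial.eval x p₁ * MvPolynomial.eval x p₂ * y)

/-- `p₃(x) = (p₁(x)(1−3g(x)) + p₂(x)(1+3g(x)))/2`. -/
noncomputable def pwP₃ (n : ℕ) (g p₁ p₂ : MvPolynomial (Fin n) ℝ)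
    (x : Fin n → ℝ) : ℝ :=
  (MvPolynomial.eval x p₁ * (1 - 3 * MvPolynomial.eval x g) +
    MvPolynomial.eval x p₂ * (1 + 3 * MvPolynomial.eval x g)) / 2

/-- for every `x` with `g(x) ∈ (0,1)`, `y ↦ p(x,y)` attains its global
minimum over `ℝ` at the unique point `y = p₁(x)`. -/
theorem argmin_piecewise_p1 (n : ℕ) (g p₁ p₂ : MvPolynomial (Fin n) ℝ)
    (x : Fin n → ℝ) (hg : MvPolynomial.eval x g ∈ Set.Ioo (0 : ℝ) 1) :
    ∀ y : ℝ, y ≠ MvPolynomial.eval x p₁ →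
      pwP n g p₁ p₂ x y > pwP n g p₁ p₂ x (MvPolynomial.eval x p₁) := by
  intro y hy
  obtain ⟨hg0, hg1⟩ := hg
  set a := MvPolynomial.eval x p₁ with ha
  set b := MvPolynomial.eval x p₂ with hb
  set G := MvPolynomial.eval x g with hG
  have key : pwP n g p₁ p₂ x y - pwP n g p₁ p₂ x a =
      (y - a) ^ 2 * ((y - a + (a - b) * (1 + G)) ^ 2 + (a - b) ^ 2 * (G * (1 - G))) := by
    simp only [pwP, ← ha, ← hb, ← hG]
    ring
  rw [gt_iff_lt, ← sub_pos, key]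
  have ht : y - a ≠ 0 := sub_ne_zero.mpr hy
  apply mul_pos (by positivity)
  rcases eq_or_ne a b with h | h
  · rw [h] at ht ⊢
    have h2 : 0 < (y - b) ^ 2 := by positivity
    nlinarith [h2]
  · have hd : a - b ≠ 0 := sub_ne_zero.mpr h
    have hG1 : 0 < 1 - G := by linarith
    have : 0 < (a - b) ^ 2 * (G * (1 - G)) := by positivity
    nlinarith [sq_nonneg (y - a + (a - b) * (1 + G))]
end

section
/- For every x ∈ ℝⁿ with g(x) ∈ (−1,0), the function y ↦ p(x,y) attains its global minimum over ℝ at the unique point y = p₂(x); that is, p(x,y) > p(x,p₂(x)) for every real y ≠ p₂(x). -/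
/-- for every `x` with `g(x) ∈ (−1,0)`, `y ↦ p(x,y)` attains its global
minimum over `ℝ` at the unique point `y = p₂(x)`. -/
theorem argmin_piecewise_p2 (n : ℕ) (g p₁ p₂ : MvPolynomial (Fin n) ℝ)
    (x : Fin n → ℝ) (hg : MvPolynomial.eval x g ∈ Set.Ioo (-1 : ℝ) 0) :
    ∀ y : ℝ, y ≠ MvPolynomial.eval x p₂ →
      pwP n g p₁ p₂ x y > pwP n g p₁ p₂ x (MvPolynomial.eval x p₂) := by
  obtain ⟨h1, h2⟩ := hg
  intro y hy
  set a := MvPolynomial.eval x p₁ with ha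
  set b := MvPolynomial.eval x p₂ with hb
  set c := MvPolynomial.eval x g with hc
  have key : pwP n g p₁ p₂ x y - pwP n g p₁ p₂ x b
      = (y - b) ^ 2 * ((y - a + c * (a - b)) ^ 2 + (-c) * (1 + c) * (a - b) ^ 2) := by
    simp only [pwP, ← ha, ← hb, ← hc]
    ring
  have hyb : (0:ℝ) < (y - b) ^ 2 := by
    have : y - b ≠ 0 := sub_ne_zero.mpr hy
    positivity
  rcases eq_or_ne a b with hab | hab
  · rw [hab] at key
    nlinarith [sq_nonneg (y - b + c * (b - b))]
  · have hab' : a - b ≠ 0 := sub_ne_zero.mpr hab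
    have hsq : (0:ℝ) < (a - b) ^ 2 := by positivity
    have hcc : (0:ℝ) < (-c) * (1 + c) := by nlinarith
    have hq : (0:ℝ) < (-c) * (1 + c) * (a - b) ^ 2 := mul_pos hcc hsq
    nlinarith [sq_nonneg (y - a + c * (a - b))]
end

section
/- For every x ∈ ℝⁿ with g(x) > 1, the function y ↦ p(x,y) attains its global minimum over ℝ at the unique point y = p₃(x); that is, p(x,y) > p(x,p₃(x)) for every real y ≠ p₃(x). -/
/-- for every `x` with `g(x) > 1`, `y ↦ p(x,y)` attains its global
minimum over `ℝ` at the unique point `y = p₃(x)`. -/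
theorem argmin_piecewise_p3_of_gt (n : ℕ) (g p₁ p₂ : MvPolynomial (Fin n) ℝ)
    (x : Fin n → ℝ) (hg : MvPolynomial.eval x g > 1) :
    ∀ y : ℝ, y ≠ pwP₃ n g p₁ p₂ x →
      pwP n g p₁ p₂ x y > pwP n g p₁ p₂ x (pwP₃ n g p₁ p₂ x) := by
  intro y hy
  set a := MvPolynomial.eval x p₁ with ha
  set b := MvPolynomial.eval x p₂ with hb
  set G := MvPolynomial.eval x g with hG
  have hp3 : pwP₃ n g p₁ p₂ x = (a * (1 - 3 * G) + b * (1 + 3 * G)) / 2 := rfl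
  have key : pwP n g p₁ p₂ x y - pwP n g p₁ p₂ x (pwP₃ n g p₁ p₂ x) =
      (y - pwP₃ n g p₁ p₂ x) ^ 2 *
        ((y - ((a + b) / 2 + G * (a - b) / 2)) ^ 2 + (G ^ 2 - 1) * (a - b) ^ 2 / 2) := by
    simp only [pwP, hp3]
    ring
  have h1 : (y - pwP₃ n g p₁ p₂ x) ^ 2 > 0 := by
    have := sub_ne_zero.mpr hy
    positivity
  have h2 : (y - ((a + b) / 2 + G * (a - b) / 2)) ^ 2 + (G ^ 2 - 1) * (a - b) ^ 2 / 2 > 0 := by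
    rcases eq_or_ne a b with hab | hab
    · have : y - ((a + b) / 2 + G * (a - b) / 2) ≠ 0 := by
        rw [hab] at hp3 ⊢
        intro h
        apply hy
        rw [hp3]; rw [sub_eq_zero] at h; rw [h]; ring
      have h3 : (y - ((a + b) / 2 + G * (a - b) / 2)) ^ 2 > 0 := by positivity
      nlinarith [sq_nonneg (a - b), sq_nonneg G]
    · have h4 : (a - b) ^ 2 > 0 := by
        have := sub_ne_zero.mpr hab
        positivity
      have hG2 : G ^ 2 - 1 > 0 := by nlinarith
      nlinarith [sq_nonneg (y - ((a + b) / 2 + G * (a - b) / 2)), mul_pos hG2 h4]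
  nlinarith [mul_pos h1 h2]
end

section
/- For every x ∈ ℝⁿ with g(x) < −1, the function y ↦ p(x,y) attains its global minimum over ℝ at the unique point y = p₃(x); that is, p(x,y) > p(x,p₃(x)) for every real y ≠ p₃(x). -/
/-- for every `x` with `g(x) < −1`, `y ↦ p(x,y)` attains its global
minimum over `ℝ` at the unique point `y = p₃(x)`. -/
theorem argmin_piecewise_p3_of_lt (n : ℕ) (g p₁ p₂ : MvPolynomial (Fin n) ℝ)
    (x : Fin n → ℝ) (hg : MvPolynomial.eval x g < -1) :
    ∀ y : ℝ, y ≠ pwP₃ n g p₁ p₂ x →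
      pwP n g p₁ p₂ x y > pwP n g p₁ p₂ x (pwP₃ n g p₁ p₂ x) := by

  intro y hy
  set A := MvPolynomial.eval x p₁ with hA
  set B := MvPolynomial.eval x p₂ with hB
  set G := MvPolynomial.eval x g with hG
  have hp3 : pwP₃ n g p₁ p₂ x = (A * (1 - 3 * G) + B * (1 + 3 * G)) / 2 := rfl
  have key : pwP n g p₁ p₂ x y - pwP n g p₁ p₂ x (pwP₃ n g p₁ p₂ x) =
      (y - pwP₃ n g p₁ p₂ x) ^ 2 *
        ((y - (A + B) / 2 - G * (A - B) / 2) ^ 2 + (2 * G ^ 2 - 2) * ((A - B) / 2) ^ 2) := by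
    simp only [pwP, hp3, ← hA, ← hB, ← hG]
    ring
  have hG2 : 1 < G ^ 2 := by nlinarith
  have hyne : y - pwP₃ n g p₁ p₂ x ≠ 0 := sub_ne_zero.mpr hy
  have hysq : 0 < (y - pwP₃ n g p₁ p₂ x) ^ 2 := by positivity
  have hfac : 0 < (y - (A + B) / 2 - G * (A - B) / 2) ^ 2 + (2 * G ^ 2 - 2) * ((A - B) / 2) ^ 2 := by
    by_cases hAB : A = B
    · have : pwP₃ n g p₁ p₂ x = A := by rw [hp3, hAB]; ring
      have hyA : y - A ≠ 0 := sub_ne_zero.mpr (by rw [← this]; exact hy)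
      have : (y - (A + B) / 2 - G * (A - B) / 2) = y - A := by rw [hAB]; ring
      rw [this, hAB]
      have h2 : 0 < (y - A) ^ 2 := by positivity
      nlinarith
    · have hs : ((A - B) / 2) ^ 2 > 0 := by
        have : A - B ≠ 0 := sub_ne_zero.mpr hAB
        positivity
      nlinarith [sq_nonneg (y - (A + B) / 2 - G * (A - B) / 2)]
  nlinarith [mul_pos hysq hfac]
end

section
/- Define p(x,y) = (y+1)²(y−1)² + 4xy(y² − 3). Then for every x ∈ (0,1), the unique global minimizer over ℝ of the function y ↦ p(x,y) is y = 1, and for every x ∈ (−1,0), the unique global minimizer over ℝ of y ↦ p(x,y) is y = −1. Hence on (−1,0)∪(0,1) the sign function satisfies sign(x) = argmin_{y∈ℝ} p(x,y). -/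
/-- with `p(x,y) = (y+1)²(y−1)² + 4xy(y²−3)`, for every `x ∈ (0,1)` the
unique global minimizer over `ℝ` of `y ↦ p(x,y)` is `y = 1`, and for every
`x ∈ (−1,0)` it is `y = −1`; hence `sign(x) = argmin_{y∈ℝ} p(x,y)` on `(−1,0)∪(0,1)`. -/
theorem argmin_sign_model (p : ℝ → ℝ → ℝ)
    (hp : ∀ x y, p x y = (y + 1) ^ 2 * (y - 1) ^ 2 + 4 * x * y * (y ^ 2 - 3)) :
    (∀ x ∈ Set.Ioo (0 : ℝ) 1, ∀ y : ℝ, y ≠ 1 → p x y > p x 1) ∧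
    (∀ x ∈ Set.Ioo (-1 : ℝ) 0, ∀ y : ℝ, y ≠ -1 → p x y > p x (-1)) := by
  constructor
  · intro x hx y hy
    rw [hp, hp]
    have hne : y - 1 ≠ 0 := sub_ne_zero.mpr hy
    have h1 : (y - 1) ^ 2 > 0 := by positivity
    have h2 : (y + 1 + 2 * x) ^ 2 + 4 * x * (1 - x) > 0 := by
      have := mul_pos hx.1 (by linarith [hx.2] : (0:ℝ) < 1 - x)
      nlinarith [sq_nonneg (y + 1 + 2 * x)]
    nlinarith [mul_pos h1 h2]
  · intro x hx y hy
    rw [hp, hp]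
    have hne : y + 1 ≠ 0 := by intro h; exact hy (by linarith)
    have h1 : (y + 1) ^ 2 > 0 := by positivity
    have h2 : (y - 1 + 2 * x) ^ 2 + 4 * (-x) * (1 + x) > 0 := by
      have := mul_pos (by linarith [hx.2] : (0:ℝ) < -x) (by linarith [hx.1] : (0:ℝ) < 1 + x)
      nlinarith [sq_nonneg (y - 1 + 2 * x)]
    nlinarith [mul_pos h1 h2]
end

section
/- Define p(x,y) = y²((y−1)² + (1 − x₁² − x₂²)(3 − 2y)) for x = (x₁,x₂) ∈ ℝ² and y ∈ ℝ. Then for every x with 0 < x₁² + x₂² < 1, the unique global minimizer over ℝ of y ↦ p(x,y) is y = 0, and for every x with 1 < x₁² + x₂² < 2, the unique global minimizer over ℝ of y ↦ p(x,y) is y = 1. -/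
/-- with `p(x,y) = y²((y−1)² + (1 − x₁² − x₂²)(3 − 2y))`, for every
`x` with `0 < x₁² + x₂² < 1` the unique global minimizer over `ℝ` of `y ↦ p(x,y)` is
`y = 0`, and for every `x` with `1 < x₁² + x₂² < 2` it is `y = 1`. -/
theorem argmin_disk_model (p : ℝ → ℝ → ℝ → ℝ)
    (hp : ∀ x₁ x₂ y, p x₁ x₂ y =
      y ^ 2 * ((y - 1) ^ 2 + (1 - x₁ ^ 2 - x₂ ^ 2) * (3 - 2 * y))) :
    (∀ x₁ x₂ : ℝ, 0 < x₁ ^ 2 + x₂ ^ 2 → x₁ ^ 2 + x₂ ^ 2 < 1 →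
      ∀ y : ℝ, y ≠ 0 → p x₁ x₂ y > p x₁ x₂ 0) ∧
    (∀ x₁ x₂ : ℝ, 1 < x₁ ^ 2 + x₂ ^ 2 → x₁ ^ 2 + x₂ ^ 2 < 2 →
      ∀ y : ℝ, y ≠ 1 → p x₁ x₂ y > p x₁ x₂ 1) := by
  constructor
  · intro x₁ x₂ h0 h1 y hy
    rw [hp, hp]
    set g : ℝ := 1 - x₁ ^ 2 - x₂ ^ 2 with hg
    have hg0 : 0 < g := by simp only [hg]; linarith
    have hg1 : g < 1 := by simp only [hg]; linarith
    have hy2 : 0 < y ^ 2 := by positivity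
    have hq : 0 < (y - 1) ^ 2 + g * (3 - 2 * y) := by
      nlinarith [sq_nonneg (y - (1 + g))]
    nlinarith [mul_pos hy2 hq]
  · intro x₁ x₂ h1 h2 y hy
    rw [hp, hp]
    set g : ℝ := 1 - x₁ ^ 2 - x₂ ^ 2 with hg
    have hg0 : g < 0 := by simp only [hg]; linarith
    have hg1 : -1 < g := by simp only [hg]; linarith
    have hy2 : 0 < (y - 1) ^ 2 := by
      have : y - 1 ≠ 0 := sub_ne_zero.mpr hy
      positivity
    have hq : 0 < y ^ 2 - 2 * g * y - g := by
      nlinarith [sq_nonneg (y - g)]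
    nlinarith [mul_pos hy2 hq]
end

section
/- (Lukács, even case) Let a < b be real numbers and let q ∈ ℝ[y] be a univariate polynomial of even degree d that is nonnegative on the interval [a,b]. Then there exist polynomials σ₀, σ₁ ∈ ℝ[y], each a sum of squares of polynomials, with deg σ₀ ≤ d and deg σ₁ ≤ d − 2, such that q(y) = σ₀(y) + σ₁(y)·(b − y)·(y − a) for all y ∈ ℝ. -/
/-!
Induction on the degree, proving the even-degree representation `σ₀ + σ₁ (y - a)(b - y)`
together with the odd-degree one `σ₀ (y - a) + σ₁ (b - y)`. Let `t` minimise `q` on `[a, b]`,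
so `m = q(t) ≥ 0`. Then `q - m = w g` with `w = y - a`, `b - y` or `(y - t)²` according as
`t = a`, `t = b` or `t` is interior (where `t` is a double root of `q - m`). The quotient `g`
is nonnegative on `[a, b]` and of smaller degree, and `w` times a representation of `g` is one
of the right parity for `q - m`. Finally `m` is added back, as `m` in even degree and as
`m / (b - a) · ((y - a) + (b - y))` in odd degree.
-/

open Polynomial Set

section TruncQuadModule

variable {R : Type*} [CommSemiring R]

def truncQuadModule (u v : R[X]) (n : ℕ) : Set R[X] :=
  {q | ∃ σ τ, IsSumSq σ ∧ IsSumSq τ ∧ (σ * u).natDegree ≤ n ∧ (τ * v).natDegree ≤ n ∧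
    q = σ * u + τ * v}

variable {u v q r : R[X]} {n : ℕ}

theorem truncQuadModule_comm (u v : R[X]) (n : ℕ) :
    truncQuadModule u v n = truncQuadModule v u n := by
  ext q
  constructor <;> rintro ⟨σ, τ, hσ, hτ, hσu, hτv, rfl⟩ <;>
    exact ⟨τ, σ, hτ, hσ, hτv, hσu, add_comm _ _⟩

theorem add_mem_truncQuadModule (hq : q ∈ truncQuadModule u v n)
    (hr : r ∈ truncQuadModule u v n) : q + r ∈ truncQuadModule u v n := by
  obtain ⟨σ, τ, hσ, hτ, hσu, hτv, rfl⟩ := hq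
  obtain ⟨σ', τ', hσ', hτ', hσu', hτv', rfl⟩ := hr
  refine ⟨σ + σ', τ + τ', hσ.add hσ', hτ.add hτ', ?_, ?_, by ring⟩
  · rw [add_mul]; exact (natDegree_add_le _ _).trans (max_le hσu hσu')
  · rw [add_mul]; exact (natDegree_add_le _ _).trans (max_le hτv hτv')

theorem sq_mul_mem_truncQuadModule (p : R[X]) (hq : q ∈ truncQuadModule u v n) :
    p ^ 2 * q ∈ truncQuadModule u v (2 * p.natDegree + n) := by
  obtain ⟨σ, τ, hσ, hτ, hσu, hτv, rfl⟩ := hq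
  refine ⟨p ^ 2 * σ, p ^ 2 * τ, (sq p ▸ IsSumSq.mul_self p).mul hσ,
    (sq p ▸ IsSumSq.mul_self p).mul hτ, ?_, ?_, by ring⟩
  · rw [mul_assoc]; exact natDegree_mul_le_of_le natDegree_pow_le hσu
  · rw [mul_assoc]; exact natDegree_mul_le_of_le natDegree_pow_le hτv

theorem mul_mem_truncQuadModule_one_mul (hq : q ∈ truncQuadModule u v n) :
    u * q ∈ truncQuadModule 1 (u * v) (u.natDegree + n) := by
  obtain ⟨σ, τ, hσ, hτ, hσu, hτv, rfl⟩ := hq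
  refine ⟨u * u * σ, τ, (IsSumSq.mul_self u).mul hσ, hτ, ?_, ?_, by ring⟩
  · rw [show u * u * σ * 1 = u * (σ * u) by ring]; exact natDegree_mul_le_of_le le_rfl hσu
  · rw [mul_left_comm]; exact natDegree_mul_le_of_le le_rfl hτv

theorem mul_mem_truncQuadModule_of_one_mul (hq : q ∈ truncQuadModule 1 (u * v) n) :
    u * q ∈ truncQuadModule u v (u.natDegree + n) := by
  obtain ⟨σ, τ, hσ, hτ, hσu, hτv, rfl⟩ := hq
  refine ⟨σ, u * u * τ, hσ, (IsSumSq.mul_self u).mul hτ, ?_, ?_, by ring⟩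
  · rw [show σ * u = u * (σ * 1) by ring]; exact natDegree_mul_le_of_le le_rfl hσu
  · rw [show u * u * τ * v = u * (τ * (u * v)) by ring]
    exact natDegree_mul_le_of_le le_rfl hτv

end TruncQuadModule

theorem isSumSq_C {c : ℝ} (hc : 0 ≤ c) : IsSumSq (C c) := by
  rw [← Real.mul_self_sqrt hc, C_mul]
  exact IsSumSq.mul_self _

theorem C_mem_truncQuadModule_one {c : ℝ} (hc : 0 ≤ c) (v : ℝ[X]) (n : ℕ) :
    C c ∈ truncQuadModule 1 v n :=
  ⟨C c, 0, isSumSq_C hc, .zero, by simp, by simp, by simp⟩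

theorem natDegree_C_sub_X (b : ℝ) : (C b - X).natDegree = 1 := by
  rw [← neg_sub, natDegree_neg, natDegree_X_sub_C]

theorem C_mem_truncQuadModule_X_sub_C {a b c : ℝ} (hab : a < b) (hc : 0 ≤ c) {n : ℕ}
    (hn : 1 ≤ n) : C c ∈ truncQuadModule (X - C a) (C b - X) n := by
  have hk : 0 ≤ c / (b - a) := div_nonneg hc (sub_nonneg.2 hab.le)
  refine ⟨C (c / (b - a)), C (c / (b - a)), isSumSq_C hk, isSumSq_C hk, ?_, ?_, ?_⟩
  · exact (natDegree_C_mul_le _ _).trans (natDegree_X_sub_C a ▸ hn)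
  · exact (natDegree_C_mul_le _ _).trans (natDegree_C_sub_X b ▸ hn)
  · rw [← mul_add, show X - C a + (C b - X) = C (b - a) by rw [C_sub]; ring, ← C_mul,
      div_mul_cancel₀ c (sub_ne_zero.2 hab.ne')]

/-- The odd-degree shape is needed even for the even case: splitting off a root at an
endpoint changes the parity of the degree. -/
def lukacsCone (a b : ℝ) (n : ℕ) : Set ℝ[X] :=
  if Even n then truncQuadModule 1 ((X - C a) * (C b - X)) n
  else truncQuadModule (X - C a) (C b - X) n

section LukacsCone

variable {a b : ℝ} {g q r : ℝ[X]} {n : ℕ}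

theorem C_mem_lukacsCone (hab : a < b) {c : ℝ} (hc : 0 ≤ c) (n : ℕ) :
    C c ∈ lukacsCone a b n := by
  unfold lukacsCone
  split_ifs with hn
  · exact C_mem_truncQuadModule_one hc _ n
  · refine C_mem_truncQuadModule_X_sub_C hab hc (Nat.one_le_iff_ne_zero.2 ?_)
    rintro rfl
    simp at hn

theorem add_mem_lukacsCone (hq : q ∈ lukacsCone a b n) (hr : r ∈ lukacsCone a b n) :
    q + r ∈ lukacsCone a b n := by
  unfold lukacsCone at *
  split_ifs at * <;> exact add_mem_truncQuadModule hq hr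

theorem X_sub_C_mul_mem_lukacsCone (hg : g ∈ lukacsCone a b n) :
    (X - C a) * g ∈ lukacsCone a b (n + 1) := by
  have hdeg := natDegree_X_sub_C a
  by_cases hn : Even n
  · simp only [lukacsCone, hn, Nat.even_add_one, if_true, not_true, if_false] at hg ⊢
    simpa [hdeg, add_comm] using mul_mem_truncQuadModule_of_one_mul hg
  · simp only [lukacsCone, hn, Nat.even_add_one, if_false, not_false_eq_true, if_true] at hg ⊢
    simpa [hdeg, add_comm] using mul_mem_truncQuadModule_one_mul hg

theorem C_sub_X_mul_mem_lukacsCone (hg : g ∈ lukacsCone a b n) :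
    (C b - X) * g ∈ lukacsCone a b (n + 1) := by
  have hdeg := natDegree_C_sub_X b
  by_cases hn : Even n
  · simp only [lukacsCone, hn, Nat.even_add_one, if_true, not_true, if_false] at hg ⊢
    rw [mul_comm] at hg
    simpa [hdeg, add_comm, truncQuadModule_comm] using mul_mem_truncQuadModule_of_one_mul hg
  · simp only [lukacsCone, hn, Nat.even_add_one, if_false, not_false_eq_true, if_true] at hg ⊢
    rw [truncQuadModule_comm] at hg
    simpa [hdeg, add_comm, mul_comm] using mul_mem_truncQuadModule_one_mul hg

theorem sq_mul_mem_lukacsCone (p : ℝ[X]) (hg : g ∈ lukacsCone a b n) :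
    p ^ 2 * g ∈ lukacsCone a b (2 * p.natDegree + n) := by
  unfold lukacsCone at *
  simp only [Nat.even_add, even_two_mul, true_iff]
  split_ifs at * <;> exact sq_mul_mem_truncQuadModule p hg

end LukacsCone

theorem X_sub_C_sq_dvd_of_isRoot_derivative {R : Type*} [CommRing R] {p : R[X]} {t : R}
    (h : p.IsRoot t) (h' : (derivative p).IsRoot t) : (X - C t) ^ 2 ∣ p := by
  rcases eq_or_ne p 0 with rfl | hp
  · exact dvd_zero _
  · exact (pow_dvd_pow _ ((one_lt_rootMultiplicity_iff_isRoot hp).2 ⟨h, h'⟩)).trans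
      (pow_rootMultiplicity_dvd p t)

theorem Icc_subset_closure_Icc_diff_singleton {a b t : ℝ} (hab : a < b) (ht : t ∈ Icc a b) :
    Icc a b ⊆ closure (Icc a b \ {t}) := by
  intro y hy
  rcases eq_or_ne y t with rfl | hyt
  · rcases ht.2.lt_or_eq with htb | rfl
    · have hsub : Ioo y b ⊆ Icc a b \ {y} := fun z hz => ⟨⟨ht.1.trans hz.1.le, hz.2.le⟩, hz.1.ne'⟩
      exact closure_mono hsub (by rw [closure_Ioo htb.ne]; exact left_mem_Icc.2 htb.le)
    · have hsub : Ioo a y ⊆ Icc a y \ {y} := fun z hz => ⟨⟨hz.1.le, hz.2.le⟩, hz.2.ne⟩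
      exact closure_mono hsub (by rw [closure_Ioo hab.ne]; exact right_mem_Icc.2 hab.le)
  · exact subset_closure ⟨hy, hyt⟩

theorem eval_nonneg_of_eval_mul_nonneg {a b t : ℝ} {w g : ℝ[X]} (hab : a < b)
    (ht : t ∈ Icc a b) (hw : ∀ y ∈ Icc a b, y ≠ t → 0 < w.eval y)
    (hwg : ∀ y ∈ Icc a b, 0 ≤ (w * g).eval y) : ∀ y ∈ Icc a b, 0 ≤ g.eval y := by
  have hoff : Icc a b \ {t} ⊆ {y | 0 ≤ g.eval y} := fun y ⟨hy, hyt⟩ =>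
    nonneg_of_mul_nonneg_right (eval_mul (p := w) ▸ hwg y hy) (hw y hy hyt)
  exact (Icc_subset_closure_Icc_diff_singleton hab ht).trans
    (closure_minimal hoff (isClosed_le continuous_const g.continuous))

/-- The factors split off `q - q(t)` at a minimiser `t` of `q` on `[a, b]`. -/
def IsLukacsFactor (a b t : ℝ) (w : ℝ[X]) : Prop :=
  0 < w.natDegree ∧ (∀ y ∈ Icc a b, y ≠ t → 0 < w.eval y) ∧
    ∀ n g, g ∈ lukacsCone a b n → w * g ∈ lukacsCone a b (n + w.natDegree)

section LukacsFactor

variable {a b t : ℝ}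

theorem isLukacsFactor_X_sub_C : IsLukacsFactor a b a (X - C a) := by
  refine ⟨by simp, fun y hy hya => ?_, fun n g hg => ?_⟩
  · simpa using lt_of_le_of_ne hy.1 (Ne.symm hya)
  · simpa using X_sub_C_mul_mem_lukacsCone hg

theorem isLukacsFactor_C_sub_X : IsLukacsFactor a b b (C b - X) := by
  refine ⟨by simp [natDegree_C_sub_X], fun y hy hyb => ?_, fun n g hg => ?_⟩
  · simpa using lt_of_le_of_ne hy.2 hyb
  · simpa [natDegree_C_sub_X] using C_sub_X_mul_mem_lukacsCone hg

theorem isLukacsFactor_X_sub_C_sq : IsLukacsFactor a b t ((X - C t) ^ 2) := by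
  refine ⟨by simp, fun y _ hyt => ?_, fun n g hg => ?_⟩
  · simpa using pow_pos (abs_pos.2 (sub_ne_zero.2 hyt)) 2
  · rw [natDegree_pow, add_comm]
    exact sq_mul_mem_lukacsCone _ hg

theorem exists_isLukacsFactor_dvd (hab : a < b) {q : ℝ[X]} (ht : t ∈ Icc a b)
    (hmin : IsMinOn (fun y => q.eval y) (Icc a b) t) :
    ∃ w, IsLukacsFactor a b t w ∧ w ∣ q - C (q.eval t) := by
  have hroot : (q - C (q.eval t)).IsRoot t := by simp
  rcases ht.1.eq_or_lt with rfl | hat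
  · exact ⟨_, isLukacsFactor_X_sub_C, dvd_iff_isRoot.2 hroot⟩
  rcases ht.2.lt_or_eq with htb | rfl
  · have hderiv : (derivative (q - C (q.eval t))).IsRoot t := by
      have := (hmin.isLocalMin (Icc_mem_nhds hat htb)).deriv_eq_zero
      simpa [Polynomial.deriv] using this
    exact ⟨_, isLukacsFactor_X_sub_C_sq, X_sub_C_sq_dvd_of_isRoot_derivative hroot hderiv⟩
  · refine ⟨_, isLukacsFactor_C_sub_X, ?_⟩
    rw [← neg_sub, neg_dvd]
    exact dvd_iff_isRoot.2 hroot

end LukacsFactor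

theorem mem_lukacsCone_of_nonneg {a b : ℝ} (hab : a < b) (q : ℝ[X])
    (hq : ∀ y ∈ Icc a b, 0 ≤ q.eval y) : q ∈ lukacsCone a b q.natDegree := by
  induction hn : q.natDegree using Nat.strong_induction_on generalizing q with
  | _ n ih =>
  obtain ⟨t, ht, hmin⟩ :=
    isCompact_Icc.exists_isMinOn (nonempty_Icc.2 hab.le) q.continuous.continuousOn
  obtain ⟨w, ⟨hw_deg, hw_pos, hw_mul⟩, g, hg_eq⟩ := exists_isLukacsFactor_dvd hab ht hmin
  have hq_eq : q = C (q.eval t) + w * g := by rw [← hg_eq]; ring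
  have hm : 0 ≤ q.eval t := hq t ht
  rcases eq_or_ne g 0 with rfl | hg
  · rw [hq_eq, mul_zero, add_zero]
    exact C_mem_lukacsCone hab hm n
  have hw : w ≠ 0 := ne_zero_of_natDegree_gt hw_deg
  have hdeg : n = g.natDegree + w.natDegree := by
    rw [← hn, hq_eq, natDegree_C_add, natDegree_mul hw hg, add_comm]
  have hg_nonneg : ∀ y ∈ Icc a b, 0 ≤ g.eval y :=
    eval_nonneg_of_eval_mul_nonneg hab ht hw_pos fun y hy => by
      rw [← hg_eq, eval_sub, eval_C, sub_nonneg]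
      exact hmin hy
  rw [hq_eq, hdeg]
  exact add_mem_lukacsCone (C_mem_lukacsCone hab hm _)
    (hw_mul _ g (ih _ (by omega) g hg_nonneg rfl))

/-- Lukács, even case: if `q ∈ ℝ[y]` has even degree `d` and is
nonnegative on `[a,b]` (`a < b`), then `q = σ₀ + σ₁·(b − y)(y − a)` with `σ₀, σ₁`
sums of squares, `deg σ₀ ≤ d`, `deg σ₁ ≤ d − 2`. -/
theorem lukacs_even (a b : ℝ) (hab : a < b) (d : ℕ) (hd : Even d)
    (q : Polynomial ℝ) (hdeg : q.natDegree = d)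
    (hnonneg : ∀ y ∈ Set.Icc a b, 0 ≤ q.eval y) :
    ∃ σ₀ σ₁ : Polynomial ℝ, IsSumSq σ₀ ∧ IsSumSq σ₁ ∧
      σ₀.natDegree ≤ d ∧ σ₁.natDegree ≤ d - 2 ∧
      ∀ y : ℝ, q.eval y = σ₀.eval y + σ₁.eval y * (b - y) * (y - a) := by
  have hq := mem_lukacsCone_of_nonneg hab q hnonneg
  rw [hdeg, lukacsCone, if_pos hd] at hq
  obtain ⟨σ₀, σ₁, hσ₀, hσ₁, hdeg₀, hdeg₁, rfl⟩ := hq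
  refine ⟨σ₀, σ₁, hσ₀, hσ₁, by simpa using hdeg₀, ?_, fun y => ?_⟩
  · rcases eq_or_ne σ₁ 0 with rfl | hσ₁0
    · simp
    have hw : ((X - C a) * (C b - X)).natDegree = 2 := by compute_degree!
    rw [natDegree_mul hσ₁0 (ne_zero_of_natDegree_gt (hw ▸ two_pos)), hw] at hdeg₁
    omega
  · simp only [mul_one, eval_add, eval_mul, eval_sub, eval_X, eval_C, add_right_inj]
    ring
end
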